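/- For fractional Brownian motion B_H with Hurst parameter H ∈ (0,1), the covariance function R(t,s) = E[B_H(t)B_H(s)] = (1/2)(t^{2H} + s^{2H} - |t-s|^{2H}) is positive semidefinite on [0,∞), i.e., for any finite collection of times t_1,...,t_n ≥ 0 and reals c_1,...,c_n, the sum ∑_{j,k} c_j c_k R(t_j,t_k) is nonnegative. -/

import Mathlib

/-!
For `0 < a < 2` the integral `J(x) = ∫₀^∞ (1 - cos (x u)) u^{-1-a} du` converges, and the
substitution `u ↦ u / |x|` gives `J(x) = |x|^a J(1)` with `J(1) > 0`. Hence, for `t, s ≥ 0`,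
`2 J(1) R(t,s) = J(t) + J(s) - J(t - s)` is the integral, against the weight `u^{-1-2H}`, of the
kernels `ψ_u(t) + ψ_u(s) - ψ_u(t - s)` with `ψ_u(x) = 1 - cos (x u)`. Each of these is positive
semidefinite: its quadratic form is `|∑ⱼ cⱼ (1 - e^{i tⱼ u})|²`.
-/

open Real

/-- The fBm covariance kernel `R(t,s) = (t^{2H} + s^{2H} - |t-s|^{2H})/2`. -/
noncomputable def fbmCov (H t s : ℝ) : ℝ :=
  (t ^ (2 * H) + s ^ (2 * H) - |t - s| ^ (2 * H)) / 2

open MeasureTheory Set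

noncomputable def oneSubCosIntegral (a x : ℝ) : ℝ :=
  ∫ u in Ioi (0 : ℝ), (1 - cos (x * u)) * u ^ (-(1 + a))

section Integrability

variable {a : ℝ} (x : ℝ)

lemma integrableOn_one_sub_cos_mul_rpow_Ioo_zero_one (ha : a < 2) :
    IntegrableOn (fun u : ℝ => (1 - cos (x * u)) * u ^ (-(1 + a))) (Ioo 0 1) := by
  have hbound : IntegrableOn (fun u : ℝ => x ^ 2 / 2 * u ^ (1 - a)) (Ioo 0 1) :=
    ((intervalIntegral.integrableOn_Ioo_rpow_iff one_pos).2 (by linarith)).const_mul _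
  refine hbound.mono' (by fun_prop) ?_
  filter_upwards [ae_restrict_mem measurableSet_Ioo] with u hu
  have hu0 : 0 < u := hu.1
  have hcos : 1 - cos (x * u) ≤ (x * u) ^ 2 / 2 := by
    linarith [one_sub_sq_div_two_le_cos (x := x * u)]
  have hrpow : u ^ 2 * u ^ (-(1 + a)) = u ^ (1 - a) := by
    rw [← rpow_natCast, ← rpow_add hu0]
    norm_num
    ring_nf
  rw [norm_of_nonneg (mul_nonneg (by linarith [cos_le_one (x * u)]) (rpow_nonneg hu0.le _))]
  calc (1 - cos (x * u)) * u ^ (-(1 + a)) ≤ (x * u) ^ 2 / 2 * u ^ (-(1 + a)) := by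
        gcongr
    _ = x ^ 2 / 2 * u ^ (1 - a) := by rw [← hrpow]; ring

lemma integrableOn_one_sub_cos_mul_rpow_Ioi_one (ha : 0 < a) :
    IntegrableOn (fun u : ℝ => (1 - cos (x * u)) * u ^ (-(1 + a))) (Ioi 1) := by
  have hbound : IntegrableOn (fun u : ℝ => 2 * u ^ (-(1 + a))) (Ioi 1) :=
    (integrableOn_Ioi_rpow_of_lt (by linarith) one_pos).const_mul _
  refine hbound.mono' (by fun_prop) ?_
  filter_upwards [ae_restrict_mem measurableSet_Ioi] with u hu
  have hrpow : 0 ≤ u ^ (-(1 + a)) := rpow_nonneg (zero_le_one.trans hu.le) _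
  rw [norm_mul, norm_of_nonneg hrpow, norm_eq_abs]
  gcongr
  rw [abs_le]
  constructor <;> linarith [cos_le_one (x * u), neg_one_le_cos (x * u)]

lemma integrableOn_one_sub_cos_mul_rpow (ha : 0 < a) (ha' : a < 2) :
    IntegrableOn (fun u : ℝ => (1 - cos (x * u)) * u ^ (-(1 + a))) (Ioi 0) := by
  rw [← Ioc_union_Ioi_eq_Ioi zero_le_one]
  refine IntegrableOn.union ?_ (integrableOn_one_sub_cos_mul_rpow_Ioi_one x ha)
  rw [integrableOn_Ioc_iff_integrableOn_Ioo]
  exact integrableOn_one_sub_cos_mul_rpow_Ioo_zero_one x ha'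

end Integrability

lemma oneSubCosIntegral_neg (a x : ℝ) : oneSubCosIntegral a (-x) = oneSubCosIntegral a x := by
  simp only [oneSubCosIntegral, neg_mul, cos_neg]

lemma oneSubCosIntegral_of_pos (a : ℝ) {x : ℝ} (hx : 0 < x) :
    oneSubCosIntegral a x = x ^ a * oneSubCosIntegral a 1 := by
  have hsubst := integral_comp_mul_left_Ioi (fun u : ℝ => (1 - cos u) * u ^ (-(1 + a))) 0 hx
  rw [mul_zero, smul_eq_mul] at hsubst
  calc oneSubCosIntegral a x
      = ∫ u in Ioi (0 : ℝ), x ^ (1 + a) * ((1 - cos (x * u)) * (x * u) ^ (-(1 + a))) := by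
        refine setIntegral_congr_fun measurableSet_Ioi fun u (hu : 0 < u) => ?_
        rw [mul_rpow hx.le hu.le, rpow_neg hx.le]
        field_simp
    _ = x ^ a * oneSubCosIntegral a 1 := by
        rw [integral_const_mul, hsubst, oneSubCosIntegral, ← mul_assoc, ← rpow_neg_one,
          ← rpow_add hx]
        simp only [one_mul]
        ring_nf

lemma oneSubCosIntegral_zero (a : ℝ) : oneSubCosIntegral a 0 = 0 := by
  simp [oneSubCosIntegral]

lemma oneSubCosIntegral_eq_abs_rpow_mul {a : ℝ} (ha : a ≠ 0) (x : ℝ) :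
    oneSubCosIntegral a x = |x| ^ a * oneSubCosIntegral a 1 := by
  rcases lt_trichotomy x 0 with hx | rfl | hx
  · rw [← oneSubCosIntegral_neg, abs_of_neg hx, oneSubCosIntegral_of_pos a (neg_pos.2 hx)]
  · rw [oneSubCosIntegral_zero, abs_zero, zero_rpow ha, zero_mul]
  · rw [abs_of_pos hx, oneSubCosIntegral_of_pos a hx]

lemma oneSubCosIntegral_one_pos {a : ℝ} (ha : 0 < a) (ha' : a < 2) :
    0 < oneSubCosIntegral a 1 := by
  have hnonneg :
      0 ≤ᵐ[volume.restrict (Ioi 0)] fun u : ℝ => (1 - cos (1 * u)) * u ^ (-(1 + a)) := by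
    filter_upwards [ae_restrict_mem measurableSet_Ioi] with u (hu : 0 < u)
    exact mul_nonneg (by linarith [cos_le_one (1 * u)]) (rpow_nonneg hu.le _)
  rw [oneSubCosIntegral, setIntegral_pos_iff_support_of_nonneg_ae hnonneg
    (integrableOn_one_sub_cos_mul_rpow 1 ha ha')]
  have hsupport : Ioo (π / 2) π ⊆
      Function.support (fun u : ℝ => (1 - cos (1 * u)) * u ^ (-(1 + a))) ∩ Ioi 0 := by
    intro u ⟨hu₁, hu₂⟩
    have hu0 : 0 < u := by linarith [pi_pos]
    have hcos : cos u ≤ 0 := cos_nonpos_of_pi_div_two_le_of_le hu₁.le (by linarith [pi_pos])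
    refine ⟨(mul_pos ?_ (rpow_pos_of_pos hu0 _)).ne', hu0⟩
    rw [one_mul]
    linarith
  calc (0 : ENNReal) < volume (Ioo (π / 2) π) := by simp [pi_pos]
    _ ≤ _ := measure_mono hsupport

lemma sum_sum_mul_one_sub_cos_nonneg {ι : Type*} [Fintype ι] (c θ : ι → ℝ) :
    0 ≤ ∑ j, ∑ k,
      c j * c k * ((1 - cos (θ j)) + (1 - cos (θ k)) - (1 - cos (θ j - θ k))) := by
  have hsq :
      ∑ j, ∑ k, c j * c k * ((1 - cos (θ j)) + (1 - cos (θ k)) - (1 - cos (θ j - θ k)))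
        = (∑ j, c j * (1 - cos (θ j))) ^ 2 + (∑ j, c j * sin (θ j)) ^ 2 := by
    simp only [sq, Finset.sum_mul_sum, ← Finset.sum_add_distrib, cos_sub]
    refine Finset.sum_congr rfl fun j _ => Finset.sum_congr rfl fun k _ => ?_
    ring
  rw [hsq]
  positivity

lemma sum_sum_mul_oneSubCosIntegral_nonneg {ι : Type*} [Fintype ι] {a : ℝ} (ha : 0 < a)
    (ha' : a < 2) (c x : ι → ℝ) :
    0 ≤ ∑ j, ∑ k, c j * c k * (oneSubCosIntegral a (x j) + oneSubCosIntegral a (x k)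
      - oneSubCosIntegral a (x j - x k)) := by
  set f : ℝ → ℝ → ℝ := fun y u => (1 - cos (y * u)) * u ^ (-(1 + a))
  have hf : ∀ y, IntegrableOn (f y) (Ioi 0) := fun y =>
    integrableOn_one_sub_cos_mul_rpow y ha ha'
  have hterm : ∀ j k,
      IntegrableOn (fun u => c j * c k * (f (x j) u + f (x k) u - f (x j - x k) u)) (Ioi 0) :=
    fun j k => (((hf _).add (hf _)).sub (hf _)).const_mul _
  calc 0 ≤ ∫ u in Ioi 0,
        ∑ j, ∑ k, c j * c k * (f (x j) u + f (x k) u - f (x j - x k) u) := by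
        refine setIntegral_nonneg measurableSet_Ioi fun u (hu : 0 < u) => ?_
        have hform := sum_sum_mul_one_sub_cos_nonneg c (fun j => x j * u)
        refine (mul_nonneg hform (rpow_nonneg hu.le (-(1 + a)))).trans_eq ?_
        simp only [f, Finset.sum_mul, sub_mul]
        refine Finset.sum_congr rfl fun j _ => Finset.sum_congr rfl fun k _ => ?_
        ring
    _ = _ := by
        rw [integral_finsetSum _ fun j _ => integrable_finsetSum _ fun k _ => hterm j k]
        refine Finset.sum_congr rfl fun j _ => ?_
        rw [integral_finsetSum _ fun k _ => hterm j k]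
        refine Finset.sum_congr rfl fun k _ => ?_
        rw [integral_const_mul,
          integral_sub (f := fun u => f (x j) u + f (x k) u) ((hf _).add (hf _)) (hf _),
          integral_add (hf _) (hf _)]
        rfl

lemma two_mul_oneSubCosIntegral_mul_fbmCov {H : ℝ} (hH : H ≠ 0) {t s : ℝ} (ht : 0 ≤ t)
    (hs : 0 ≤ s) :
    2 * oneSubCosIntegral (2 * H) 1 * fbmCov H t s = oneSubCosIntegral (2 * H) t
      + oneSubCosIntegral (2 * H) s - oneSubCosIntegral (2 * H) (t - s) := by
  have hscale := oneSubCosIntegral_eq_abs_rpow_mul (mul_ne_zero two_ne_zero hH)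
  rw [hscale t, hscale s, hscale (t - s), abs_of_nonneg ht, abs_of_nonneg hs, fbmCov]
  ring

theorem fbm_cov_posSemidef (H : ℝ) (hH : H ∈ Set.Ioo (0 : ℝ) 1)
    (n : ℕ) (t : Fin n → ℝ) (ht : ∀ i, 0 ≤ t i) (c : Fin n → ℝ) :
    0 ≤ ∑ j : Fin n, ∑ k : Fin n, c j * c k * fbmCov H (t j) (t k) := by
  obtain ⟨hH0, hH1⟩ := hH
  have hJ : 0 < 2 * oneSubCosIntegral (2 * H) 1 :=
    mul_pos two_pos (oneSubCosIntegral_one_pos (by positivity) (by linarith))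
  have hform := sum_sum_mul_oneSubCosIntegral_nonneg (a := 2 * H) (by positivity) (by linarith) c t
  refine nonneg_of_mul_nonneg_right (hform.trans_eq ?_) hJ
  simp only [Finset.mul_sum]
  refine Finset.sum_congr rfl fun j _ => Finset.sum_congr rfl fun k _ => ?_
  rw [mul_left_comm, two_mul_oneSubCosIntegral_mul_fbmCov hH0.ne' (ht j) (ht k)]
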